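/- arXiv:2002.09126 — 2 statements merged into one kernel-verified Lean document; each statement's English description precedes it below -/
import Mathlib

section
/- Let X_1, ..., X_n be the counts obtained by throwing m balls independently and uniformly at random into n bins. Then E[max_i X_i] for m+1 balls exceeds E[max_i X_i] for m balls by at least 1/n. Consequently, E[max_i X_i] − m/n is non-decreasing in m. -/
def Mload (n k : ℕ) (f : Fin k → Fin n) : ℕ :=
  Finset.univ.sup fun i : Fin n => (Finset.univ.filter fun b : Fin k => f b = i).card

lemma cnt_cons {n m : ℕ} (j : Fin n) (g : Fin m → Fin n) (i : Fin n) :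
    (Finset.univ.filter fun b : Fin (m+1) => (Fin.cons j g : Fin (m+1) → Fin n) b = i).card
      = (if j = i then 1 else 0)
        + (Finset.univ.filter fun b : Fin m => g b = i).card := by
  rw [Finset.card_filter, Finset.card_filter, Fin.sum_univ_succ]
  simp [Fin.cons_zero, Fin.cons_succ]

lemma key_sum (n m : ℕ) (hn : 0 < n) :
    n * (∑ g : Fin m → Fin n, Mload n m g) + n ^ m ≤
    ∑ f : Fin (m+1) → Fin n, Mload n (m+1) f := by
  haveI : NeZero n := ⟨hn.ne'⟩
  have hsum : ∑ f : Fin (m+1) → Fin n, Mload n (m+1) f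
      = ∑ g : Fin m → Fin n, ∑ j : Fin n, Mload n (m+1) (Fin.cons j g) := by
    rw [← (Fin.consEquiv (fun _ : Fin (m+1) => Fin n)).sum_comp
      (fun f => Mload n (m+1) f)]
    rw [Fintype.sum_prod_type]
    rw [Finset.sum_comm]
    rfl
  rw [hsum]
  have hper : ∀ g : Fin m → Fin n,
      n * Mload n m g + 1 ≤ ∑ j : Fin n, Mload n (m+1) (Fin.cons j g) := by
    intro g
    obtain ⟨i0, -, hi0⟩ := Finset.exists_mem_eq_sup (Finset.univ : Finset (Fin n))
      Finset.univ_nonempty (fun i : Fin n => (Finset.univ.filter fun b : Fin m => g b = i).card)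
    have hmono : ∀ j : Fin n, Mload n m g ≤ Mload n (m+1) (Fin.cons j g) := by
      intro j
      apply Finset.sup_mono_fun
      intro i _
      rw [cnt_cons]
      exact Nat.le_add_left _ _
    have hbig : Mload n m g + 1 ≤ Mload n (m+1) (Fin.cons i0 g) := by
      have h1 : (Finset.univ.filter fun b : Fin (m+1) =>
          (Fin.cons i0 g : Fin (m+1) → Fin n) b = i0).card = 1 + Mload n m g := by
        rw [cnt_cons, if_pos rfl, Mload, hi0]
      calc Mload n m g + 1
          = (Finset.univ.filter fun b : Fin (m+1) =>
              (Fin.cons i0 g : Fin (m+1) → Fin n) b = i0).card := by omega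
        _ ≤ _ := Finset.le_sup (f := fun i : Fin n => (Finset.univ.filter
              fun b : Fin (m+1) => (Fin.cons i0 g : Fin (m+1) → Fin n) b = i).card)
              (Finset.mem_univ i0)
    calc n * Mload n m g + 1
        = (Finset.univ.erase i0).card * Mload n m g + (Mload n m g + 1) := by
          rw [Finset.card_erase_of_mem (Finset.mem_univ i0), Finset.card_univ,
            Fintype.card_fin]
          have h : n - 1 + 1 = n := Nat.succ_pred_eq_of_pos hn
          nlinarith [h]
      _ ≤ (∑ j ∈ Finset.univ.erase i0, Mload n (m+1) (Fin.cons j g))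
            + Mload n (m+1) (Fin.cons i0 g) := by
          refine add_le_add ?_ hbig
          calc (Finset.univ.erase i0).card * Mload n m g
              = ∑ _j ∈ Finset.univ.erase i0, Mload n m g := by
                rw [Finset.sum_const, smul_eq_mul]
            _ ≤ _ := Finset.sum_le_sum fun j _ => hmono j
      _ = ∑ j : Fin n, Mload n (m+1) (Fin.cons j g) := by
          rw [Finset.sum_erase_add _ _ (Finset.mem_univ i0)]
  calc n * (∑ g : Fin m → Fin n, Mload n m g) + n ^ m
      = ∑ g : Fin m → Fin n, (n * Mload n m g + 1) := by
        rw [Finset.sum_add_distrib, Finset.mul_sum, Finset.sum_const, Finset.card_univ]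
        simp [Fintype.card_fun]
    _ ≤ _ := Finset.sum_le_sum fun g _ => hper g

/-- Balls into bins: throwing one more ball uniformly into n bins increases the
expected maximum load by at least 1/n; hence E[max_i X_i] − m/n is
non-decreasing in the number of balls m. -/
theorem stmt_5 (n : ℕ) (hn : 0 < n)
    (Emax : ℕ → ℝ)
    (hE : ∀ m, Emax m = (∑ f : Fin m → Fin n,
        ((Finset.univ.sup fun i : Fin n =>
          (Finset.univ.filter fun b : Fin m => f b = i).card : ℕ) : ℝ)) / n ^ m) :
    (∀ m, Emax m + 1 / n ≤ Emax (m + 1)) ∧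
    (∀ m m' : ℕ, m ≤ m' → Emax m - m / n ≤ Emax m' - m' / n) := by
  have hnR : (0:ℝ) < n := by exact_mod_cast hn
  have hstep : ∀ m, Emax m + 1 / n ≤ Emax (m + 1) := by
    intro m
    have hkey := key_sum n m hn
    have hkeyR : (n:ℝ) * (∑ g : Fin m → Fin n, (Mload n m g : ℝ)) + (n:ℝ) ^ m ≤
        ∑ f : Fin (m+1) → Fin n, (Mload n (m+1) f : ℝ) := by
      exact_mod_cast hkey
    have hEm : Emax m = (∑ g : Fin m → Fin n, (Mload n m g : ℝ)) / (n:ℝ) ^ m := hE m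
    have hEm1 : Emax (m+1) = (∑ f : Fin (m+1) → Fin n, (Mload n (m+1) f : ℝ)) / (n:ℝ) ^ (m+1) :=
      hE (m+1)
    rw [hEm, hEm1]
    have hlhs : (∑ g : Fin m → Fin n, (Mload n m g : ℝ)) / (n:ℝ) ^ m + 1 / n
        = ((n:ℝ) * (∑ g : Fin m → Fin n, (Mload n m g : ℝ)) + (n:ℝ) ^ m) / (n:ℝ) ^ (m+1) := by
      field_simp
      ring
    rw [hlhs]
    exact div_le_div_of_nonneg_right hkeyR (by positivity) |>.trans_eq rfl
  refine ⟨hstep, ?_⟩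
  intro m m' hle
  induction m', hle using Nat.le_induction with
  | base => exact le_refl _
  | succ k hk ih =>
    have h1 := hstep k
    have h2 : ((k:ℝ)+1)/n = (k:ℝ)/n + 1/n := by ring
    push_cast
    rw [h2]
    push_cast at ih
    linarith
end

section
/- For the uniform-target variant of the game with p_v = w_{uv} = 1, identical target payoffs Rᵈ > Pᵈ, λ = 0 (so q_i = 1/n for each of n targets), and one defensive resource, the defender's expected utility for informant set U equals (E[max_i X_i] − |V|/n)(Rᵈ − Pᵈ) + (|Y|/n)Rᵈ + ((n−1)|Y|/n)Pᵈ, where V is the set of attackers connected to U and X_i is the number of reported attackers choosing target i (each of the |V| reported attackers chooses a target uniformly at random). Hence maximizing DefEU(U) is equivalent to maximizing E[max_i X_i] − |V|/n, which is a non-decreasing function of |V|; so it reduces to maximizing |V|, i.e., the maximum coverage problem. -/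
/-!
Averaging the payoff over the `n ^ v` equally likely target profiles of the reported attackers
turns `DefEU` into an affine function of the expected maximum load `Emax v` of `v` balls thrown
uniformly into `n` bins. Throwing one more ball never lowers the maximum load, and raises it by
one when the ball lands in a fullest bin, which happens with probability at least `1 / n`;
hence `Emax (v + 1) ≥ Emax v + 1 / n`, so `Emax v - v / n` and with it `DefEU` is monotone.
-/

open Finset

section BallsInBins

variable {β : Type*} {v : ℕ}

lemma sum_pi_fin_succ [Fintype β] {M : Type*} [AddCommMonoid M] (F : (Fin (v + 1) → β) → M) :
    ∑ f, F f = ∑ j, ∑ g : Fin v → β, F (Fin.cons j g) := by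
  rw [← Fintype.sum_prod_type']
  exact (Fintype.sum_equiv (Fin.consEquiv fun _ => β) _ _ fun _ => rfl).symm

lemma card_fiber_cons [DecidableEq β] (j : β) (g : Fin v → β) (i : β) :
    #{b | (Fin.cons j g : Fin (v + 1) → β) b = i} = #{b | g b = i} + if j = i then 1 else 0 := by
  simp only [card_filter, Fin.sum_univ_succ, Fin.cons_zero, Fin.cons_succ]
  omega

variable [Fintype β] [DecidableEq β]

def maxLoad (f : Fin v → β) : ℕ :=
  univ.sup fun i => #{b | f b = i}

lemma maxLoad_le_maxLoad_cons (j : β) (g : Fin v → β) :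
    maxLoad g ≤ maxLoad (Fin.cons j g : Fin (v + 1) → β) :=
  sup_mono_fun fun i _ => by rw [card_fiber_cons]; omega

lemma exists_maxLoad_cons [Nonempty β] (g : Fin v → β) :
    ∃ j, maxLoad g + 1 ≤ maxLoad (Fin.cons j g : Fin (v + 1) → β) := by
  obtain ⟨j, -, hj⟩ := exists_mem_eq_sup univ univ_nonempty fun i => #{b | g b = i}
  refine ⟨j, ?_⟩
  calc maxLoad g + 1 = #{b | (Fin.cons j g : Fin (v + 1) → β) b = j} := by
        rw [card_fiber_cons, maxLoad, hj, if_pos rfl]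
    _ ≤ _ := le_sup (f := fun i => #{b | (Fin.cons j g : Fin (v + 1) → β) b = i}) (mem_univ j)

lemma card_mul_maxLoad_lt_sum_cons [Nonempty β] (g : Fin v → β) :
    Fintype.card β * maxLoad g < ∑ j, maxLoad (Fin.cons j g : Fin (v + 1) → β) := by
  obtain ⟨j, hj⟩ := exists_maxLoad_cons g
  rw [← smul_eq_mul, ← card_univ, ← sum_const]
  exact sum_lt_sum (fun j _ => maxLoad_le_maxLoad_cons j g) ⟨j, mem_univ j, hj⟩

lemma card_mul_sum_maxLoad_add_le [Nonempty β] (v : ℕ) :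
    Fintype.card β * ∑ g : Fin v → β, maxLoad g + Fintype.card β ^ v ≤
      ∑ f : Fin (v + 1) → β, maxLoad f := by
  rw [sum_pi_fin_succ, sum_comm, mul_sum]
  calc _ = ∑ g : Fin v → β, (Fintype.card β * maxLoad g + 1) := by
        simp [sum_add_distrib]
    _ ≤ _ := sum_le_sum fun g _ => card_mul_maxLoad_lt_sum_cons g

variable (β) in
noncomputable def expectedMaxLoad (v : ℕ) : ℝ :=
  (∑ f : Fin v → β, (maxLoad f : ℝ)) / Fintype.card β ^ v

lemma expectedMaxLoad_add_inv_le [Nonempty β] (v : ℕ) :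
    expectedMaxLoad β v + (Fintype.card β : ℝ)⁻¹ ≤ expectedMaxLoad β (v + 1) := by
  have hN : (0 : ℝ) < Fintype.card β := by exact_mod_cast Fintype.card_pos
  have key : (Fintype.card β : ℝ) * ∑ g : Fin v → β, (maxLoad g : ℝ) + Fintype.card β ^ v ≤
      ∑ f : Fin (v + 1) → β, (maxLoad f : ℝ) := by
    exact_mod_cast card_mul_sum_maxLoad_add_le (β := β) v
  calc expectedMaxLoad β v + (Fintype.card β : ℝ)⁻¹
      = ((Fintype.card β : ℝ) * ∑ g : Fin v → β, (maxLoad g : ℝ) + Fintype.card β ^ v) /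
          Fintype.card β ^ (v + 1) := by
        rw [expectedMaxLoad]
        field_simp
        ring
    _ ≤ expectedMaxLoad β (v + 1) := by
        rw [expectedMaxLoad]
        gcongr

lemma monotone_expectedMaxLoad_sub [Nonempty β] :
    Monotone fun v : ℕ => expectedMaxLoad β v - v / Fintype.card β :=
  monotone_nat_of_le_succ fun v => by
    have := expectedMaxLoad_add_inv_le (β := β) v
    push_cast
    rw [add_div, one_div]
    linarith

end BallsInBins

lemma sum_mul_add_div_card {ι : Type*} [Fintype ι] [Nonempty ι] (x : ι → ℝ) (a b : ℝ) :
    (∑ i, (x i * a + b)) / Fintype.card ι = (∑ i, x i) / Fintype.card ι * a + b := by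
  have : (Fintype.card ι : ℝ) ≠ 0 := by positivity
  rw [sum_add_distrib, ← sum_mul, sum_const, card_univ, nsmul_eq_mul]
  field_simp

/-- Uniform-target reduction for NP-hardness: with p_v = w_uv = 1, identical
payoffs Rᵈ > Pᵈ, λ = 0 and one resource, the defender's expected utility when
v attackers are reported (out of Ytot) equals
(E[max_i X_i] − v/n)(Rᵈ−Pᵈ) + (Ytot/n)Rᵈ + ((n−1)Ytot/n)Pᵈ,
which is non-decreasing in v; hence maximizing DefEU reduces to maximizing the
number of reported attackers. -/
theorem stmt_9 (n : ℕ) (hn : 0 < n) (Ytot : ℕ) (Rd Pd : ℝ) (hRP : Pd < Rd)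
    (M : ∀ v : ℕ, (Fin v → Fin n) → ℕ)
    (hM : ∀ v f, M v f = Finset.univ.sup fun i : Fin n =>
      (Finset.univ.filter fun b : Fin v => f b = i).card)
    (Emax : ℕ → ℝ)
    (hE : ∀ v, Emax v = (∑ f : Fin v → Fin n, (M v f : ℝ)) / n ^ v)
    (DefEU : ℕ → ℝ)
    (hD : ∀ v, DefEU v = (∑ f : Fin v → Fin n,
        ((M v f : ℝ) * Rd + ((v : ℝ) - (M v f : ℝ)) * Pd
          + (((Ytot : ℝ) - v) / n) * Rd
          + (((Ytot : ℝ) - v) * ((n : ℝ) - 1) / n) * Pd)) / n ^ v) :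
    (∀ v, DefEU v = (Emax v - v / n) * (Rd - Pd)
        + ((Ytot : ℝ) / n) * Rd + (((n : ℝ) - 1) * Ytot / n) * Pd) ∧
    (∀ v v' : ℕ, v ≤ v' → DefEU v ≤ DefEU v') := by
  have : NeZero n := ⟨hn.ne'⟩
  have hcard : ∀ v, (n : ℝ) ^ v = Fintype.card (Fin v → Fin n) := by simp
  have hDefEU : ∀ v, DefEU v = (Emax v - v / n) * (Rd - Pd)
      + ((Ytot : ℝ) / n) * Rd + (((n : ℝ) - 1) * Ytot / n) * Pd := by
    intro v
    have hn' : (n : ℝ) ≠ 0 := by positivity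
    rw [hD, hE, hcard, ← sum_congr rfl fun f _ => show (M v f : ℝ) * (Rd - Pd)
        + (v * Pd + ((Ytot : ℝ) - v) / n * Rd + ((Ytot : ℝ) - v) * (n - 1) / n * Pd) = _ by ring,
      sum_mul_add_div_card]
    field_simp
    ring
  refine ⟨hDefEU, fun v v' hvv' => ?_⟩
  have hEmax : Emax = expectedMaxLoad (Fin n) := by
    ext v
    simp only [hE, hM, expectedMaxLoad, maxLoad, Fintype.card_fin]
  have := monotone_expectedMaxLoad_sub (β := Fin n) hvv'
  simp only [Fintype.card_fin, ← hEmax] at this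
  have hgap : 0 ≤ Rd - Pd := sub_nonneg.2 hRP.le
  rw [hDefEU, hDefEU]
  gcongr
end
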